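/- Let p ≥ q ≥ 1, n = p + q, and let X be an n×n complex Hermitian matrix written in blocks X = [[X₁₁, X₁₂],[X₁₂*, X₂₂]] with X₁₂ of size p×q. Set I_{p,q} = Diag(I_p, −I_q) and X̃ = −I_{p,q} X I_{p,q}. Then X̃ is Hermitian with e(X̃) = e(X)*, one has X + X̃ = 2·[[0, X₁₂],[X₁₂*, 0]] and e(X + X̃) = 2·ŝ^{p,q} where s = s(X₁₂); consequently (e(X), e(X)*, 2·ŝ^{p,q}) ∈ Horn(n). -/

import Mathlib

/-!
Conjugation by the involution `I_{p,q}` changes the sign of the off-diagonal blocks only, so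
`X - I_{p,q} X I_{p,q} = 2 [[0, X₁₂], [X₁₂*, 0]]`, while `-I_{p,q} X I_{p,q}` is similar to `-X`.
Sorted eigenvalues of a Hermitian matrix are determined by its characteristic polynomial. For
`Z = [[0, Y], [Y*, 0]]` the block product `(x - Z) [[x, 0], [Y*, x]] = [[x² - YY*, ∗], [0, x²]]`
gives `x^p χ_Z(x) = x^q χ_{YY*}(x²)`; as `YY*` has rank at most `q`, its eigenvalues are
`s₁², …, s_q², 0, …, 0`, whence `χ_Z(x) = x^(p-q) ∏ (x - sᵢ)(x + sᵢ)`.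
-/

open Matrix

/-- Eigenvalues of a (Hermitian) complex matrix, listed in decreasing order. -/
noncomputable def eigVec {k : ℕ} (X : Matrix (Fin k) (Fin k) ℂ) (hX : X.IsHermitian) :
    Fin k → ℝ :=
  fun i => hX.eigenvalues (Tuple.sort hX.eigenvalues i.rev)

/-- The `i`-th (0-based) singular value of a rectangular complex matrix:
the square root of the `i`-th largest eigenvalue of `Y * Yᴴ` (and `0` for `i ≥ a`). -/
noncomputable def sval {a b : ℕ} (Y : Matrix (Fin a) (Fin b) ℂ) (i : ℕ) : ℝ :=
  if h : i < a then
    Real.sqrt (eigVec (Y * Yᴴ) (Matrix.isHermitian_mul_conjTranspose_self Y) ⟨i, h⟩)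
  else 0

/-- The Horn cone `Horn(k)`. -/
def Horn (k : ℕ) : Set ((Fin k → ℝ) × (Fin k → ℝ) × (Fin k → ℝ)) :=
  { v | ∃ (X Y : Matrix (Fin k) (Fin k) ℂ) (hX : X.IsHermitian) (hY : Y.IsHermitian),
      v.1 = eigVec X hX ∧ v.2.1 = eigVec Y hY ∧ v.2.2 = eigVec (X + Y) (hX.add hY) }

/-- The Littlewood–Richardson cone `LR(m,n)`. -/
def LRcone (m n : ℕ) : Set ((Fin (m + n) → ℝ) × (Fin m → ℝ) × (Fin n → ℝ)) :=
  { v | ∃ (M : Matrix (Fin (m + n)) (Fin (m + n)) ℂ) (hM : M.IsHermitian),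
      v.1 = eigVec M hM ∧
      v.2.1 = eigVec (M.submatrix (Fin.castAdd n) (Fin.castAdd n))
        (hM.submatrix (Fin.castAdd n)) ∧
      v.2.2 = eigVec (M.submatrix (Fin.natAdd m) (Fin.natAdd m))
        (hM.submatrix (Fin.natAdd m)) }

/-- Top-left `p × p` block. -/
def blockTL (p q : ℕ) (X : Matrix (Fin (p + q)) (Fin (p + q)) ℂ) : Matrix (Fin p) (Fin p) ℂ :=
  X.submatrix (Fin.castAdd q) (Fin.castAdd q)

/-- Top-right `p × q` block. -/
def blockTR (p q : ℕ) (X : Matrix (Fin (p + q)) (Fin (p + q)) ℂ) : Matrix (Fin p) (Fin q) ℂ :=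
  X.submatrix (Fin.castAdd q) (Fin.natAdd p)

/-- Bottom-left `q × p` block. -/
def blockBL (p q : ℕ) (X : Matrix (Fin (p + q)) (Fin (p + q)) ℂ) : Matrix (Fin q) (Fin p) ℂ :=
  X.submatrix (Fin.natAdd p) (Fin.castAdd q)

/-- Bottom-right `q × q` block. -/
def blockBR (p q : ℕ) (X : Matrix (Fin (p + q)) (Fin (p + q)) ℂ) : Matrix (Fin q) (Fin q) ℂ :=
  X.submatrix (Fin.natAdd p) (Fin.natAdd p)

/-- `λ* = (−λ_k, …, −λ_1)`. -/
def starVec {k : ℕ} (x : Fin k → ℝ) : Fin k → ℝ := fun i => -x i.rev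

/-- `ŝ^{p,q} = (s₁, …, s_q, 0, …, 0, −s_q, …, −s₁) ∈ ℝ^{p+q}` (with `p − q` middle zeros). -/
noncomputable def hatPQ (p q : ℕ) (s : Fin q → ℝ) : Fin (p + q) → ℝ :=
  fun i =>
    if h : (i : ℕ) < q then s ⟨i, h⟩
    else if h' : (i : ℕ) < p then 0
    else -s ⟨p + q - 1 - i, by have := i.isLt; omega⟩

/-- The cone `A(p,q)`: pairs `(e(X), s(X₁₂))` for `X` Hermitian of size `p+q`. -/
def coneA (p q : ℕ) : Set ((Fin (p + q) → ℝ) × (Fin q → ℝ)) :=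
  { v | ∃ (X : Matrix (Fin (p + q)) (Fin (p + q)) ℂ) (hX : X.IsHermitian),
      v.1 = eigVec X hX ∧ ∀ i : Fin q, v.2 i = sval (blockTR p q X) (i : ℕ) }

/-- The cone `S(p,q)`: triples `(s(X), s(X₁₂), s(X₂₁))`. -/
def coneS (p q : ℕ) : Set ((Fin (p + q) → ℝ) × (Fin q → ℝ) × (Fin q → ℝ)) :=
  { v | ∃ X : Matrix (Fin (p + q)) (Fin (p + q)) ℂ,
      (∀ i : Fin (p + q), v.1 i = sval X (i : ℕ)) ∧
      (∀ i : Fin q, v.2.1 i = sval (blockTR p q X) (i : ℕ)) ∧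
      (∀ i : Fin q, v.2.2 i = sval (blockBL p q X) (i : ℕ)) }

/-- The cone `T(p,q)`: triples `(s(X), s(X₁₁), s(X₂₂))`. -/
def coneT (p q : ℕ) : Set ((Fin (p + q) → ℝ) × (Fin p → ℝ) × (Fin q → ℝ)) :=
  { v | ∃ X : Matrix (Fin (p + q)) (Fin (p + q)) ℂ,
      (∀ i : Fin (p + q), v.1 i = sval X (i : ℕ)) ∧
      (∀ i : Fin p, v.2.1 i = sval (blockTL p q X) (i : ℕ)) ∧
      (∀ i : Fin q, v.2.2 i = sval (blockBR p q X) (i : ℕ)) }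

/-- `μ(A) = (a_r − r ≥ … ≥ a₂ − 2 ≥ a₁ − 1)` as a decreasing real vector, for
`A = {a₁ < … < a_r}` a subset of `[n]` (0-based indexing internally). -/
noncomputable def muVec {n r : ℕ} (A : Finset (Fin n)) (h : A.card = r) : Fin r → ℝ :=
  fun k => (((A.orderIsoOfFin h k.rev : Fin n) : ℕ) : ℝ) - ((k.rev : ℕ) : ℝ)

/-- `A^o = {ℓ + 1 − a : a ∈ A}` inside `[ℓ]`. -/
def opp {n : ℕ} (A : Finset (Fin n)) : Finset (Fin n) := A.image Fin.rev

/-- `|s|_{K ∩ [q]}` where `K ⊆ [n]`, `s ∈ ℝ^q` and `[q]` is viewed inside `[n]`. -/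
noncomputable def sumRestr {n q : ℕ} (s : Fin q → ℝ) (K : Finset (Fin n)) : ℝ :=
  ∑ i ∈ K, (if h : (i : ℕ) < q then s ⟨i, h⟩ else 0)

/-- The augmented matrix `Ŷ^{p,q} = [[0, Y], [Yᴴ, 0]]` of size `p + q`. -/
def hatM (p q : ℕ) (Y : Matrix (Fin p) (Fin q) ℂ) : Matrix (Fin (p + q)) (Fin (p + q)) ℂ :=
  Matrix.reindex finSumFinEquiv finSumFinEquiv (Matrix.fromBlocks 0 Y Yᴴ 0)

open Polynomial

section SortedEigenvalues

variable {k : ℕ} {A : Matrix (Fin k) (Fin k) ℂ}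

theorem eigVec_eq_eigenvalues_comp (hA : A.IsHermitian) :
    eigVec A hA = hA.eigenvalues ∘ Fin.revPerm.trans (Tuple.sort hA.eigenvalues) :=
  rfl

theorem eigVec_antitone (hA : A.IsHermitian) : Antitone (eigVec A hA) :=
  fun _ _ hij => Tuple.monotone_sort hA.eigenvalues (Fin.rev_le_rev.mpr hij)

theorem Antitone.eq_of_map_univ_eq {f g : Fin k → ℝ} (hf : Antitone f) (hg : Antitone g)
    (h : Finset.univ.val.map f = Finset.univ.val.map g) : f = g := by
  have hperm : (List.ofFn f).Perm (List.ofFn g) := by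
    rwa [← Multiset.coe_eq_coe, ← Fin.univ_val_map, ← Fin.univ_val_map]
  exact List.ofFn_injective (hperm.eq_of_sortedGE hf.sortedGE_ofFn hg.sortedGE_ofFn)

theorem charpoly_ofReal_smul_eq_prod_eigVec (hA : A.IsHermitian) (c : ℝ) :
    ((c : ℂ) • A).charpoly = ∏ i, (X - C ((c * eigVec A hA i : ℝ) : ℂ)) := by
  have hdiag : diagonal (fun i => ((c * hA.eigenvalues i : ℝ) : ℂ)) =
      (c : ℂ) • diagonal (RCLike.ofReal ∘ hA.eigenvalues) := by
    rw [← diagonal_smul]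
    congr 1
    ext i
    simp
  rw [eigVec_eq_eigenvalues_comp]
  conv_lhs => rw [hA.spectral_theorem, Unitary.conjStarAlgAut_apply, ← Matrix.smul_mul,
    ← Matrix.mul_smul, ← hdiag, charpoly_mul_comm, ← Matrix.mul_assoc,
    Unitary.coe_star_mul_self, Matrix.one_mul, charpoly_diagonal]
  exact (Equiv.prod_comp _ (fun i => X - C ((c * hA.eigenvalues i : ℝ) : ℂ))).symm

theorem charpoly_eq_prod_eigVec (hA : A.IsHermitian) :
    A.charpoly = ∏ i, (X - C ((eigVec A hA i : ℝ) : ℂ)) := by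
  simpa using charpoly_ofReal_smul_eq_prod_eigVec hA 1

theorem eigVec_eq_of_charpoly_eq_prod (hA : A.IsHermitian) {d : Fin k → ℝ} (hd : Antitone d)
    (h : A.charpoly = ∏ i, (X - C ((d i : ℝ) : ℂ))) : eigVec A hA = d := by
  have hroots := congrArg Polynomial.roots ((charpoly_eq_prod_eigVec hA).symm.trans h)
  rw [roots_prod _ _ (by simp [Finset.prod_ne_zero_iff, X_sub_C_ne_zero]),
    roots_prod _ _ (by simp [Finset.prod_ne_zero_iff, X_sub_C_ne_zero])] at hroots
  simp only [roots_X_sub_C, Multiset.bind_singleton] at hroots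
  refine (eigVec_antitone hA).eq_of_map_univ_eq hd
    (Multiset.map_injective Complex.ofReal_injective ?_)
  simpa only [Multiset.map_map, Function.comp_def] using hroots

theorem eigVec_of_eq_ofReal_smul (hA : A.IsHermitian) {B : Matrix (Fin k) (Fin k) ℂ}
    (hB : B.IsHermitian) {c : ℝ} (hc : 0 ≤ c) (h : B = (c : ℂ) • A) :
    eigVec B hB = fun i => c * eigVec A hA i :=
  eigVec_eq_of_charpoly_eq_prod hB
    (fun _ _ hij => mul_le_mul_of_nonneg_left (eigVec_antitone hA hij) hc)
    (h ▸ charpoly_ofReal_smul_eq_prod_eigVec hA c)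

theorem eigVec_of_eq_neg_conj (hA : A.IsHermitian) {B P : Matrix (Fin k) (Fin k) ℂ}
    (hB : B.IsHermitian) (hP : P * P = 1) (h : B = -(P * A * P)) :
    eigVec B hB = starVec (eigVec A hA) := by
  refine eigVec_eq_of_charpoly_eq_prod hB
    (fun _ _ hij => neg_le_neg (eigVec_antitone hA (Fin.rev_le_rev.mpr hij))) ?_
  have hB' : B = P * (((-1 : ℝ) : ℂ) • A * P) := by
    rw [h]
    simp [Matrix.mul_assoc]
  rw [hB', charpoly_mul_comm, Matrix.mul_assoc, hP, Matrix.mul_one,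
    charpoly_ofReal_smul_eq_prod_eigVec hA, ← Equiv.prod_comp Fin.revPerm]
  simp [starVec]

theorem card_eigVec_ne_zero (hA : A.IsHermitian) :
    Fintype.card {i // eigVec A hA i ≠ 0} = A.rank := by
  rw [hA.rank_eq_card_non_zero_eigs]
  exact Fintype.card_congr ((Fin.revPerm.trans (Tuple.sort hA.eigenvalues)).subtypeEquiv
    fun _ => Iff.rfl)

end SortedEigenvalues

theorem Antitone.eq_zero_of_card_ne_zero_le {p q : ℕ} {f : Fin p → ℝ} (hf : Antitone f)
    (h0 : ∀ i, 0 ≤ f i) (hcard : Fintype.card {i // f i ≠ 0} ≤ q) {j : Fin p} (hj : q ≤ j) :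
    f j = 0 := by
  by_contra hne
  have hsub : Finset.Iic j ⊆ Finset.univ.filter (fun i => f i ≠ 0) := fun i hi =>
    Finset.mem_filter.mpr ⟨Finset.mem_univ _,
      ((lt_of_le_of_ne (h0 j) (Ne.symm hne)).trans_le (hf (Finset.mem_Iic.mp hi))).ne'⟩
  have := Finset.card_le_card hsub
  rw [Fin.card_Iic] at this
  rw [Fintype.card_subtype] at hcard
  omega

section SingularValues

variable {a b : ℕ} (Y : Matrix (Fin a) (Fin b) ℂ)

theorem eigVec_mul_conjTranspose_nonneg (i : Fin a) :
    0 ≤ eigVec (Y * Yᴴ) (isHermitian_mul_conjTranspose_self Y) i :=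
  eigenvalues_self_mul_conjTranspose_nonneg Y _

theorem sval_nonneg (i : ℕ) : 0 ≤ sval Y i := by
  unfold sval
  split_ifs
  exacts [Real.sqrt_nonneg _, le_rfl]

theorem sval_sq (i : Fin a) :
    sval Y i ^ 2 = eigVec (Y * Yᴴ) (isHermitian_mul_conjTranspose_self Y) i := by
  rw [sval, dif_pos i.isLt, Real.sq_sqrt (eigVec_mul_conjTranspose_nonneg Y i)]

theorem sval_antitone : Antitone (sval Y) := by
  intro i j hij
  by_cases hj : j < a
  · rw [sval, sval, dif_pos hj, dif_pos (hij.trans_lt hj)]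
    exact Real.sqrt_le_sqrt (eigVec_antitone _ (Fin.mk_le_mk.mpr hij))
  · rw [sval, dif_neg hj]
    exact sval_nonneg Y i

theorem sval_eq_zero_of_le {i : ℕ} (hi : b ≤ i) : sval Y i = 0 := by
  unfold sval
  split_ifs with ha
  · have hrank : (Y * Yᴴ).rank ≤ b := (rank_mul_le_right _ _).trans (rank_le_height _)
    rw [(eigVec_antitone _).eq_zero_of_card_ne_zero_le (eigVec_mul_conjTranspose_nonneg Y)
      ((card_eigVec_ne_zero _).trans_le hrank) (j := ⟨i, ha⟩) hi, Real.sqrt_zero]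
  · rfl

end SingularValues

section HatPQ

variable {p q : ℕ}

theorem hatPQ_antitone {s : Fin q → ℝ} (hs : Antitone s) (h0 : ∀ i, 0 ≤ s i) :
    Antitone (hatPQ p q s) := by
  intro i j hij
  have hij' : (i : ℕ) ≤ j := hij
  simp only [hatPQ]
  split_ifs <;> first
    | omega
    | exact le_rfl
    | exact h0 _
    | exact neg_nonpos.mpr (h0 _)
    | exact (neg_nonpos.mpr (h0 _)).trans (h0 _)
    | exact hs (Fin.mk_le_mk.mpr (by omega))
    | exact neg_le_neg (hs (Fin.mk_le_mk.mpr (by omega)))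

theorem hatPQ_castAdd {s : Fin q → ℝ} {t : ℕ → ℝ} (hst : ∀ i : Fin q, s i = t i)
    (ht : ∀ i, q ≤ i → t i = 0) (j : Fin p) : hatPQ p q s (Fin.castAdd q j) = t j := by
  simp only [hatPQ, Fin.val_castAdd]
  split_ifs with h
  · exact hst _
  · exact (ht j (not_lt.mp h)).symm
  · omega

theorem hatPQ_natAdd (hqp : q ≤ p) (s : Fin q → ℝ) (i : Fin q) :
    hatPQ p q s (Fin.natAdd p i) = -s i.rev := by
  simp only [hatPQ, Fin.val_natAdd]
  rw [dif_neg (by omega), dif_neg (by omega)]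
  congr 2
  ext
  simp only [Fin.val_rev]
  omega

theorem prod_X_sub_C_hatPQ (hqp : q ≤ p) {s : Fin q → ℝ} {t : ℕ → ℝ}
    (hst : ∀ i : Fin q, s i = t i) (ht : ∀ i, q ≤ i → t i = 0) :
    ∏ i, (X - C (hatPQ p q s i : ℂ)) =
      (∏ j : Fin p, (X - C (t j : ℂ))) * ∏ i, (X + C (s i : ℂ)) := by
  rw [Fin.prod_univ_add]
  simp only [hatPQ_castAdd hst ht, hatPQ_natAdd hqp]
  congr 1
  rw [← Equiv.prod_comp Fin.revPerm]
  simp [sub_eq_add_neg]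

theorem prod_X_add_C_of_eq_zero {t : ℕ → ℝ} (hqp : q ≤ p) (ht : ∀ i, q ≤ i → t i = 0) :
    ∏ j : Fin p, (X + C (t j : ℂ)) = X ^ (p - q) * ∏ i : Fin q, (X + C (t i : ℂ)) := by
  rw [Fin.prod_univ_eq_prod_range (fun j => X + C (t j : ℂ)),
    Fin.prod_univ_eq_prod_range (fun j => X + C (t j : ℂ)),
    ← Finset.prod_range_mul_prod_Ico _ hqp, mul_comm, Finset.prod_congr rfl (g := fun _ => X), Finset.prod_const, Nat.card_Ico]
  intro i hi
  simp [ht i (Finset.mem_Ico.mp hi).1]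

end HatPQ

section AntidiagonalBlocks

variable {R m n : Type*} [CommRing R] [Fintype m] [Fintype n] [DecidableEq m] [DecidableEq n]

theorem charpoly_comp_eq_det (M : Matrix n n R) (r : R[X]) :
    M.charpoly.comp r = (scalar n r - M.map C).det := by
  rw [charpoly, ← coe_compRingHom_apply, RingHom.map_det]
  congr 1
  ext i j
  by_cases h : i = j <;> simp [h]

theorem charpoly_fromBlocks_zero₁₁_zero₂₂ (A : Matrix m n R) (B : Matrix n m R) :
    X ^ Fintype.card m * (fromBlocks 0 A B 0).charpoly =
      X ^ Fintype.card n * (A * B).charpoly.comp (X ^ 2) := by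
  have hprod : charmatrix (fromBlocks 0 A B 0) *
      fromBlocks (scalar m X) 0 (B.map C) (scalar n X) =
        fromBlocks (scalar m (X ^ 2) - (A * B).map C) (-(A.map C * scalar n X)) 0
          (scalar n (X ^ 2)) := by
    have hcharmatrix : charmatrix (fromBlocks 0 A B 0) =
        fromBlocks (scalar m X) (-A.map C) (-B.map C) (scalar n X) := by
      ext (i | i) (j | j) <;> simp [charmatrix_apply, diagonal_apply]
    rw [hcharmatrix, fromBlocks_multiply]
    congr 1 <;> simp [-scalar_apply, scalar_comm, Commute.all, Matrix.map_mul, sq, sub_eq_add_neg]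
    rfl
  have hdet := congrArg det hprod
  rw [det_mul, det_fromBlocks_zero₁₂, det_fromBlocks_zero₂₁, ← charpoly_comp_eq_det] at hdet
  simp only [scalar_apply, det_diagonal, Finset.prod_const, Finset.card_univ] at hdet
  rw [← (isRegular_X_pow (R := R) (Fintype.card n)).left.eq_iff, charpoly]
  linear_combination hdet

end AntidiagonalBlocks

section HatM

variable {p q : ℕ}

theorem isHermitian_hatM (Y : Matrix (Fin p) (Fin q) ℂ) : (hatM p q Y).IsHermitian :=
  (isHermitian_zero.fromBlocks rfl isHermitian_zero).submatrix _

theorem charpoly_hatM (hqp : q ≤ p) (Y : Matrix (Fin p) (Fin q) ℂ) :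
    (hatM p q Y).charpoly = ∏ i, (X - C (hatPQ p q (fun i => sval Y i) i : ℂ)) := by
  have hzero : ∀ i, q ≤ i → sval Y i = 0 := fun i hi => sval_eq_zero_of_le Y hi
  have hYY : (Y * Yᴴ).charpoly = ∏ j : Fin p, (X - C ((sval Y j : ℂ) ^ 2)) := by
    simp_rw [charpoly_eq_prod_eigVec (isHermitian_mul_conjTranspose_self Y), ← sval_sq]
    push_cast
    rfl
  have hfactor : ∀ j : Fin p, (X - C ((sval Y j : ℂ) ^ 2)).comp (X ^ 2) =
      (X - C (sval Y j : ℂ)) * (X + C (sval Y j : ℂ)) := by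
    intro j
    rw [sub_comp, X_comp, C_comp, map_pow]
    ring
  have hblocks := charpoly_fromBlocks_zero₁₁_zero₂₂ Y Yᴴ
  rw [Fintype.card_fin, Fintype.card_fin, hYY, prod_comp,
    Finset.prod_congr rfl fun j _ => hfactor j, Finset.prod_mul_distrib, prod_X_add_C_of_eq_zero hqp hzero] at hblocks
  rw [hatM, charpoly_reindex, prod_X_sub_C_hatPQ hqp (fun _ => rfl) hzero,
    ← (isRegular_X_pow (R := ℂ) p).left.eq_iff, hblocks, ← pow_mul_pow_sub X hqp]
  ring

theorem eigVec_hatM (hqp : q ≤ p) (Y : Matrix (Fin p) (Fin q) ℂ) :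
    eigVec (hatM p q Y) (isHermitian_hatM Y) = hatPQ p q (fun i => sval Y i) :=
  eigVec_eq_of_charpoly_eq_prod _
    (hatPQ_antitone (fun i j hij => sval_antitone Y (show (i : ℕ) ≤ j from hij))
      fun i => sval_nonneg Y i)
    (charpoly_hatM hqp Y)

end HatM

section SignMatrix

variable {m n R : Type*} [Fintype m] [Fintype n] [DecidableEq m] [DecidableEq n] [Ring R]

theorem fromBlocks_one_neg_one_mul_self :
    fromBlocks (1 : Matrix m m R) 0 0 (-1 : Matrix n n R) * fromBlocks 1 0 0 (-1) = 1 := by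
  simp [fromBlocks_multiply, fromBlocks_one]

theorem sub_fromBlocks_one_neg_one_conj (M : Matrix (m ⊕ n) (m ⊕ n) R) :
    M - fromBlocks 1 0 0 (-1) * M * fromBlocks 1 0 0 (-1) =
      (2 : R) • fromBlocks 0 M.toBlocks₁₂ M.toBlocks₂₁ 0 := by
  conv_lhs => rw [← fromBlocks_toBlocks M]
  simp [fromBlocks_multiply, two_smul, sub_eq_add_neg, fromBlocks_neg, fromBlocks_add]

variable {p q : ℕ}

/-- The matrix `I_{p,q}`. -/
def signMatrix (p q : ℕ) : Matrix (Fin (p + q)) (Fin (p + q)) ℂ :=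
  reindex finSumFinEquiv finSumFinEquiv (fromBlocks 1 0 0 (-1))

theorem signMatrix_mul_self : signMatrix p q * signMatrix p q = 1 := by
  simp only [signMatrix, ← coe_reindexAlgEquiv ℂ ℂ, ← map_mul, fromBlocks_one_neg_one_mul_self,
    map_one]

theorem isHermitian_signMatrix : (signMatrix p q).IsHermitian :=
  (isHermitian_one.fromBlocks (by simp) isHermitian_one.neg).submatrix _

theorem sub_signMatrix_conj {X : Matrix (Fin (p + q)) (Fin (p + q)) ℂ} (hX : X.IsHermitian) :
    X - signMatrix p q * X * signMatrix p q = (2 : ℂ) • hatM p q (blockTR p q X) := by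
  set ρ := reindexAlgEquiv ℂ ℂ (finSumFinEquiv : Fin p ⊕ Fin q ≃ Fin (p + q))
  set M := ρ.symm X
  have hM : (M.toBlocks₁₂)ᴴ = M.toBlocks₂₁ := by
    have hMH : M.IsHermitian := hX.submatrix _
    rw [← fromBlocks_toBlocks M] at hMH
    exact (isHermitian_fromBlocks_iff.mp hMH).2.1
  calc X - signMatrix p q * X * signMatrix p q
      = ρ (M - fromBlocks 1 0 0 (-1) * M * fromBlocks 1 0 0 (-1)) := by
        rw [map_sub, map_mul, map_mul, ρ.apply_symm_apply]
        rfl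
    _ = (2 : ℂ) • hatM p q (blockTR p q X) := by
        rw [sub_fromBlocks_one_neg_one_conj, map_smul, ← hM]
        rfl

end SignMatrix

theorem stmt_0_general (p q : ℕ) (hpq : q ≤ p)
    (X Ipq Xt : Matrix (Fin (p + q)) (Fin (p + q)) ℂ) (hX : X.IsHermitian)
    (hIpq : Ipq = Matrix.reindex finSumFinEquiv finSumFinEquiv
      (Matrix.fromBlocks (1 : Matrix (Fin p) (Fin p) ℂ) 0 0 (-1 : Matrix (Fin q) (Fin q) ℂ)))
    (hXt : Xt = -(Ipq * X * Ipq))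
    (s : Fin q → ℝ) (hs : ∀ i : Fin q, s i = sval (blockTR p q X) (i : ℕ)) :
    ∃ hH : Xt.IsHermitian,
      eigVec Xt hH = starVec (eigVec X hX) ∧
      X + Xt = (2 : ℂ) • hatM p q (blockTR p q X) ∧
      eigVec (X + Xt) (hX.add hH) = (fun i => 2 * hatPQ p q s i) ∧
      (eigVec X hX, starVec (eigVec X hX), fun i => 2 * hatPQ p q s i) ∈ Horn (p + q) := by
  change Ipq = signMatrix p q at hIpq
  subst hIpq
  have hH : Xt.IsHermitian := by
    have hconj := isHermitian_mul_mul_conjTranspose (signMatrix p q) hX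
    rw [isHermitian_signMatrix.eq] at hconj
    exact hXt ▸ hconj.neg
  have hsum : X + Xt = (2 : ℂ) • hatM p q (blockTR p q X) := by
    rw [hXt, ← sub_eq_add_neg, sub_signMatrix_conj hX]
  have hstar : eigVec Xt hH = starVec (eigVec X hX) :=
    eigVec_of_eq_neg_conj hX hH signMatrix_mul_self hXt
  have hsumEig : eigVec (X + Xt) (hX.add hH) = fun i => 2 * hatPQ p q s i := by
    rw [eigVec_of_eq_ofReal_smul (isHermitian_hatM (blockTR p q X)) _ zero_le_two
      (by rw [hsum]; norm_num), eigVec_hatM hpq]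
    simp_rw [← hs]
  exact ⟨hH, hstar, hsum, hsumEig, X, Xt, hX, hH, rfl, hstar.symm, hsumEig.symm⟩

theorem stmt_0 (p q : ℕ) (hq : 1 ≤ q) (hpq : q ≤ p)
    (X Ipq Xt : Matrix (Fin (p + q)) (Fin (p + q)) ℂ) (hX : X.IsHermitian)
    (hIpq : Ipq = Matrix.reindex finSumFinEquiv finSumFinEquiv
      (Matrix.fromBlocks (1 : Matrix (Fin p) (Fin p) ℂ) 0 0 (-1 : Matrix (Fin q) (Fin q) ℂ)))
    (hXt : Xt = -(Ipq * X * Ipq))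
    (s : Fin q → ℝ) (hs : ∀ i : Fin q, s i = sval (blockTR p q X) (i : ℕ)) :
    ∃ hH : Xt.IsHermitian,
      eigVec Xt hH = starVec (eigVec X hX) ∧
      X + Xt = (2 : ℂ) • hatM p q (blockTR p q X) ∧
      eigVec (X + Xt) (hX.add hH) = (fun i => 2 * hatPQ p q s i) ∧
      (eigVec X hX, starVec (eigVec X hX), fun i => 2 * hatPQ p q s i) ∈ Horn (p + q) :=
  stmt_0_general p q hpq X Ipq Xt hX hIpq hXt s hs
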